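/- arXiv:1512.05828 — 3 statements merged into one kernel-verified Lean document; each statement's English description precedes it below -/
import Mathlib

section
/- Let γ > 1, α > 0, and q = (α+1)γ/((α+1)γ - α). Let Ω be a finite measure space and m, w : Ω → [0,∞) measurable with ∫ m^{α+1} dμ ≤ C₁ and ∫ w^γ m dμ ≤ C₂. Then m w^{γ-1} ∈ L^q(Ω) with ‖m w^{γ-1}‖_{L^q} ≤ C₁^{1/(γ(α+1))} · C₂^{(γ-1)/γ}. -/
open MeasureTheory

/-!
Factor `m w^(γ-1) = (m^(α+1))^(1/s) · (w^γ m)^(1/r)` with `s = γ(α+1)` and `r = γ/(γ-1)`.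
Since `1/s + 1/r = 1/q`, Hölder's inequality bounds the `L^q` norm by the product of the
`L^s` and `L^r` norms of the two factors, which are `(∫ m^(α+1))^(1/s)` and `(∫ w^γ m)^(1/r)`.
-/

lemma ENNReal.holderTriple_ofReal {p q r : ℝ} (h : p.HolderTriple q r) :
    ENNReal.HolderTriple (ENNReal.ofReal p) (ENNReal.ofReal q) (ENNReal.ofReal r) :=
  (ENNReal.holderTriple_coe_iff (by simpa using h.pos')).2 h.toNNReal

lemma eLpNorm_rpow_one_div_eq {α : Type*} [MeasurableSpace α] (μ : Measure α) {F : α → ℝ}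
    (hF : ∀ x, 0 ≤ F x) {p : ℝ} (hp : 0 < p) :
    eLpNorm (fun x => F x ^ (1 / p)) (ENNReal.ofReal p) μ
      = (∫⁻ x, ENNReal.ofReal (F x) ∂μ) ^ (1 / p) := by
  rw [eLpNorm_eq_lintegral_rpow_enorm_toReal (by simpa using hp) ENNReal.ofReal_ne_top,
    ENNReal.toReal_ofReal hp.le]
  congr 1
  refine lintegral_congr fun x => ?_
  have hFx := hF x
  rw [Real.enorm_of_nonneg (by positivity), ENNReal.ofReal_rpow_of_nonneg (by positivity) hp.le,
    ← Real.rpow_mul hFx, one_div_mul_cancel hp.ne', Real.rpow_one]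

lemma mul_rpow_sub_one_eq_rpow_mul_rpow {m w γ α : ℝ} (hm : 0 ≤ m) (hw : 0 ≤ w)
    (hγ : γ ≠ 0) (hα : α + 1 ≠ 0) :
    m * w ^ (γ - 1)
      = (m ^ (α + 1)) ^ (1 / (γ * (α + 1))) * (w ^ γ * m) ^ (1 / (γ / (γ - 1))) := by
  have hexp : (α + 1) * (1 / (γ * (α + 1))) + (γ - 1) / γ = 1 := by field_simp; ring
  rw [one_div_div, Real.mul_rpow (by positivity) hm, ← Real.rpow_mul hm, ← Real.rpow_mul hw,
    mul_div_cancel₀ _ hγ, mul_left_comm, ← Real.rpow_add' hm (by rw [hexp]; exact one_ne_zero),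
    hexp, Real.rpow_one, mul_comm]

theorem eLpNorm_mul_rpow_sub_one_le {Ω : Type*} [MeasurableSpace Ω] (μ : Measure Ω)
    {γ α : ℝ} (hγ : 1 < γ) (hα : 0 < α + 1) {m w : Ω → ℝ} (hm : AEMeasurable m μ)
    (hw : AEMeasurable w μ) (hm0 : ∀ x, 0 ≤ m x) (hw0 : ∀ x, 0 ≤ w x) :
    eLpNorm (fun x => m x * w x ^ (γ - 1)) (ENNReal.ofReal ((α + 1) * γ / ((α + 1) * γ - α))) μ
      ≤ (∫⁻ x, ENNReal.ofReal (m x ^ (α + 1)) ∂μ) ^ (1 / (γ * (α + 1)))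
        * (∫⁻ x, ENNReal.ofReal (w x ^ γ * m x) ∂μ) ^ (1 / (γ / (γ - 1))) := by
  have hγ1 : 0 < γ - 1 := sub_pos.2 hγ
  have hγ0 : 0 < γ := by linarith
  have hs : 0 < γ * (α + 1) := by positivity
  have hr : 0 < γ / (γ - 1) := by positivity
  have := ENNReal.holderTriple_ofReal
    (⟨by field_simp; ring, hs, hr⟩ :
      (γ * (α + 1)).HolderTriple (γ / (γ - 1)) ((α + 1) * γ / ((α + 1) * γ - α)))
  calc eLpNorm (fun x => m x * w x ^ (γ - 1))
        (ENNReal.ofReal ((α + 1) * γ / ((α + 1) * γ - α))) μ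
      = eLpNorm ((fun x => (m x ^ (α + 1)) ^ (1 / (γ * (α + 1))))
          • fun x => (w x ^ γ * m x) ^ (1 / (γ / (γ - 1))))
          (ENNReal.ofReal ((α + 1) * γ / ((α + 1) * γ - α))) μ := by
        congr 1
        funext x
        exact mul_rpow_sub_one_eq_rpow_mul_rpow (hm0 x) (hw0 x) hγ0.ne' hα.ne'
    _ ≤ eLpNorm (fun x => (m x ^ (α + 1)) ^ (1 / (γ * (α + 1)))) (ENNReal.ofReal (γ * (α + 1))) μ
        * eLpNorm (fun x => (w x ^ γ * m x) ^ (1 / (γ / (γ - 1))))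
          (ENNReal.ofReal (γ / (γ - 1))) μ :=
        eLpNorm_smul_le_mul_eLpNorm
          (((hw.pow_const _).mul hm).pow_const _).aestronglyMeasurable
          ((hm.pow_const _).pow_const _).aestronglyMeasurable
    _ = _ := by
        rw [eLpNorm_rpow_one_div_eq μ (fun x => Real.rpow_nonneg (hm0 x) _) hs,
          eLpNorm_rpow_one_div_eq μ (fun x => mul_nonneg (Real.rpow_nonneg (hw0 x) _) (hm0 x)) hr]

theorem stmt_8_general (γ α C₁ C₂ : ℝ) (hγ : 1 < γ) (hα : 0 < α) (hC₁ : 0 ≤ C₁) (hC₂ : 0 ≤ C₂)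
    {Ω : Type*} [MeasurableSpace Ω] (μ : Measure Ω)
    (m w : Ω → ℝ) (hm : Measurable m) (hw : Measurable w)
    (hm0 : ∀ x, 0 ≤ m x) (hw0 : ∀ x, 0 ≤ w x)
    (h1 : ∫⁻ x, ENNReal.ofReal (m x ^ (α + 1)) ∂μ ≤ ENNReal.ofReal C₁)
    (h2 : ∫⁻ x, ENNReal.ofReal (w x ^ γ * m x) ∂μ ≤ ENNReal.ofReal C₂) :
    MemLp (fun x => m x * w x ^ (γ - 1)) (ENNReal.ofReal ((α + 1) * γ / ((α + 1) * γ - α))) μ ∧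
    eLpNorm (fun x => m x * w x ^ (γ - 1)) (ENNReal.ofReal ((α + 1) * γ / ((α + 1) * γ - α))) μ
      ≤ ENNReal.ofReal (C₁ ^ (1 / (γ * (α + 1))) * C₂ ^ ((γ - 1) / γ)) := by
  have hbound : eLpNorm (fun x => m x * w x ^ (γ - 1))
      (ENNReal.ofReal ((α + 1) * γ / ((α + 1) * γ - α))) μ
        ≤ ENNReal.ofReal (C₁ ^ (1 / (γ * (α + 1))) * C₂ ^ ((γ - 1) / γ)) := by
    have hγ0 : 0 < γ := by linarith
    refine (eLpNorm_mul_rpow_sub_one_le μ hγ (by linarith) hm.aemeasurable hw.aemeasurable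
      hm0 hw0).trans ?_
    rw [one_div_div, ENNReal.ofReal_mul (by positivity),
      ← ENNReal.ofReal_rpow_of_nonneg hC₁ (by positivity),
      ← ENNReal.ofReal_rpow_of_nonneg hC₂ (div_nonneg (by linarith) hγ0.le)]
    gcongr
  exact ⟨⟨(hm.mul (hw.pow_const _)).aestronglyMeasurable, hbound.trans_lt ENNReal.ofReal_lt_top⟩,
    hbound⟩

/-- Quantitative drift estimate: ∫ m^{α+1} ≤ C₁ and ∫ w^γ m ≤ C₂ imply
m w^{γ-1} ∈ L^q with the stated bound, where q = (α+1)γ/((α+1)γ-α). -/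
theorem stmt_8 (γ α C₁ C₂ : ℝ) (hγ : 1 < γ) (hα : 0 < α) (hC₁ : 0 ≤ C₁) (hC₂ : 0 ≤ C₂)
    {Ω : Type*} [MeasurableSpace Ω] (μ : Measure Ω) [IsFiniteMeasure μ]
    (m w : Ω → ℝ) (hm : Measurable m) (hw : Measurable w)
    (hm0 : ∀ x, 0 ≤ m x) (hw0 : ∀ x, 0 ≤ w x)
    (h1 : ∫⁻ x, ENNReal.ofReal (m x ^ (α + 1)) ∂μ ≤ ENNReal.ofReal C₁)
    (h2 : ∫⁻ x, ENNReal.ofReal (w x ^ γ * m x) ∂μ ≤ ENNReal.ofReal C₂) :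
    MemLp (fun x => m x * w x ^ (γ - 1)) (ENNReal.ofReal ((α + 1) * γ / ((α + 1) * γ - α))) μ ∧
    eLpNorm (fun x => m x * w x ^ (γ - 1)) (ENNReal.ofReal ((α + 1) * γ / ((α + 1) * γ - α))) μ
      ≤ ENNReal.ofReal (C₁ ^ (1 / (γ * (α + 1))) * C₂ ^ ((γ - 1) / γ)) :=
  stmt_8_general γ α C₁ C₂ hγ hα hC₁ hC₂ μ m w hm hw hm0 hw0 h1 h2
end

section
/- Let q > d ≥ 1, L > 0, C > 0. There exists a constant c = c(q, d, L, C) > 0 with the following property: if m : 𝕋^d → (0,∞) is Lipschitz with Lipschitz constant L, attains its minimum value m̄ = min m > 0, and satisfies ∫_{𝕋^d} m^{-q} dx ≤ C, then m̄ ≥ c. -/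
/-!
On the ball of radius `m̄` around a minimum point, the Lipschitz bound gives `m ≤ (1 + L) m̄`,
and for `m̄ ≤ 1/2` that ball is a cube of volume `(2 m̄)^d` in the unit torus. Hence
`C ≥ ∫ m^{-q} ≥ ((1 + L) m̄)^{-q} (2 m̄)^d`, a negative power `m̄^{d - q}` times a constant,
which bounds `m̄` from below.
-/

open MeasureTheory Metric

theorem AddCircle.volume_closedBall_pi {ι : Type*} [Fintype ι] {T : ℝ} [Fact (0 < T)]
    (x : ι → AddCircle T) {r : ℝ} (hr : 0 ≤ r) (hrT : 2 * r ≤ T) :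
    volume (closedBall x r) = ENNReal.ofReal ((2 * r) ^ Fintype.card ι) := by
  rw [closedBall_pi _ hr, volume_pi_pi]
  simp only [AddCircle.volume_closedBall, min_eq_right hrT]
  rw [Finset.prod_const, Finset.card_univ, ← ENNReal.ofReal_pow (by linarith)]

theorem ofReal_mul_measure_le_lintegral_ofReal {α : Type*} [MeasurableSpace α] {μ : Measure α}
    {f : α → ℝ} {s : Set α} (hs : MeasurableSet s) {a : ℝ} (ha : ∀ x ∈ s, a ≤ f x) :
    ENNReal.ofReal a * μ s ≤ ∫⁻ x, ENNReal.ofReal (f x) ∂μ :=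
  calc ENNReal.ofReal a * μ s = ∫⁻ _ in s, ENNReal.ofReal a ∂μ :=
        (setLIntegral_const _ _).symm
    _ ≤ ∫⁻ x in s, ENNReal.ofReal (f x) ∂μ :=
      setLIntegral_mono' hs fun x hx => ENNReal.ofReal_le_ofReal (ha x hx)
    _ ≤ _ := setLIntegral_le_lintegral _ _

theorem AddCircle.rpow_neg_mul_le_lintegral_rpow_neg {ι : Type*} [Fintype ι] {T : ℝ}
    [Fact (0 < T)] {q L mbar : ℝ} (hq : 0 ≤ q) (hL : 0 ≤ L) {m : (ι → AddCircle T) → ℝ}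
    (hLip : ∀ x y, |m x - m y| ≤ L * dist x y) (hmin : ∀ x, mbar ≤ m x)
    {x₀ : ι → AddCircle T} (hx₀ : m x₀ = mbar) (hmbar : 0 < mbar) (hmbarT : 2 * mbar ≤ T) :
    ENNReal.ofReal (((1 + L) * mbar) ^ (-q) * (2 * mbar) ^ Fintype.card ι) ≤
      ∫⁻ x, ENNReal.ofReal (m x ^ (-q)) := by
  have hball : ∀ x ∈ closedBall x₀ mbar, ((1 + L) * mbar) ^ (-q) ≤ m x ^ (-q) := by
    intro x hx
    have hLx : m x - m x₀ ≤ L * mbar :=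
      (le_abs_self _).trans ((hLip x x₀).trans (mul_le_mul_of_nonneg_left hx hL))
    exact Real.rpow_le_rpow_of_nonpos (hmbar.trans_le (hmin x)) (by linarith) (by linarith)
  rw [ENNReal.ofReal_mul (by positivity), ← volume_closedBall_pi x₀ hmbar.le hmbarT]
  exact ofReal_mul_measure_le_lintegral_ofReal isClosed_closedBall.measurableSet hball

theorem stmt_10_general (d : ℕ) (q L C : ℝ) (hq : (d : ℝ) < q)
    (hL : 0 < L) (hC : 0 < C) :
    ∃ c : ℝ, 0 < c ∧
      ∀ (m : (Fin d → AddCircle (1:ℝ)) → ℝ) (mbar : ℝ),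
        (∀ x y, |m x - m y| ≤ L * dist x y) →
        (∀ x, mbar ≤ m x) → (∃ x₀, m x₀ = mbar) → 0 < mbar →
        (∫⁻ x, ENNReal.ofReal (m x ^ (-q)) ≤ ENNReal.ofReal C) →
        c ≤ mbar := by
  set a : ℝ := (1 + L) ^ (-q) * 2 ^ d
  refine ⟨min (1 / 2) ((C / a) ^ ((d - q)⁻¹ : ℝ)), by positivity, ?_⟩
  rintro m mbar hLip hmin ⟨x₀, hx₀⟩ hmbar hint
  rcases le_or_gt (1 / 2) mbar with hbig | hsmall
  · exact (min_le_left _ _).trans hbig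
  have hbound := (AddCircle.rpow_neg_mul_le_lintegral_rpow_neg (d.cast_nonneg.trans hq.le)
    hL.le hLip hmin hx₀ hmbar (by linarith)).trans hint
  have hsplit : ((1 + L) * mbar) ^ (-q) * (2 * mbar) ^ Fintype.card (Fin d) =
      a * mbar ^ ((d : ℝ) - q) := by
    rw [Fintype.card_fin, Real.mul_rpow (by positivity) hmbar.le, mul_pow, sub_eq_neg_add,
      Real.rpow_add hmbar, Real.rpow_natCast]
    ring
  rw [ENNReal.ofReal_le_ofReal_iff hC.le, hsplit] at hbound
  refine (min_le_right _ _).trans ((Real.rpow_inv_le_iff_of_neg (by positivity) hmbar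
    (by linarith)).2 ?_)
  rwa [le_div_iff₀' (by positivity)]

/-- Quantitative positivity: a Lipschitz positive function on the torus with
∫ m^{-q} ≤ C (q > d) has a minimum bounded below by a constant c(q,d,L,C) > 0. -/
theorem stmt_10 (d : ℕ) (q L C : ℝ) (hd : 1 ≤ d) (hq : (d : ℝ) < q)
    (hL : 0 < L) (hC : 0 < C) :
    ∃ c : ℝ, 0 < c ∧
      ∀ (m : (Fin d → AddCircle (1:ℝ)) → ℝ) (mbar : ℝ),
        (∀ x y, |m x - m y| ≤ L * dist x y) →
        (∀ x, mbar ≤ m x) → (∃ x₀, m x₀ = mbar) → 0 < mbar →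
        (∫⁻ x, ENNReal.ofReal (m x ^ (-q)) ≤ ENNReal.ofReal C) →
        c ≤ mbar :=
  stmt_10_general d q L C hq hL hC
end

section
/- Let V : 𝕋^d × [0,∞) → ℝ be continuous and non-decreasing in its second argument. For smooth functions u₁, u₂ ∈ C^∞(𝕋^d) and smooth m₁, m₂ ∈ C^∞(𝕋^d) with m₁, m₂ ≥ 0, define for i = 1, 2: F_i = -u_i - |Du_i|²/2 + V(x, m_i) and G_i = m_i - div(m_i Du_i) - 1. Then ∫_{𝕋^d} [(F₁ - F₂)(m₁ - m₂) + (G₁ - G₂)(u₁ - u₂)] dx = ∫_{𝕋^d} (m₁ + m₂)/2 · |Du₁ - Du₂|² dx + ∫_{𝕋^d} (V(x, m₁) - V(x, m₂))(m₁ - m₂) dx ≥ 0. -/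
open MeasureTheory

section LLaux

variable {d : ℕ}

private lemma LL_cube_eq (d : ℕ) :
    {x : EuclideanSpace ℝ (Fin d) | ∀ i, x i ∈ Set.Icc (0:ℝ) 1}
      = (MeasurableEquiv.toLp 2 (Fin d → ℝ)).symm ⁻¹' (Set.Icc 0 1) := by
  ext x
  simp only [Set.mem_setOf_eq, Set.mem_Icc, Set.mem_preimage, Pi.le_def,
    MeasurableEquiv.coe_toLp_symm]
  exact ⟨fun h => ⟨fun i => (h i).1, fun i => (h i).2⟩, fun h i => ⟨h.1 i, h.2 i⟩⟩

private lemma LL_fderiv_shift (f : EuclideanSpace ℝ (Fin d) → ℝ) (hf : Differentiable ℝ f)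
    (c x : EuclideanSpace ℝ (Fin d)) :
    fderiv ℝ (fun y => f (y + c)) x = fderiv ℝ f (x + c) := by
  have h1 : HasFDerivAt (fun y : EuclideanSpace ℝ (Fin d) => y + c)
      (ContinuousLinearMap.id ℝ (EuclideanSpace ℝ (Fin d))) x :=
    (hasFDerivAt_id x).add_const c
  have := ((hf (x + c)).hasFDerivAt.comp x h1)
  rw [show (fun y => f (y + c)) = f ∘ fun y => y + c from rfl]
  simpa using this.fderiv

private lemma LL_fderiv_periodic (f : EuclideanSpace ℝ (Fin d) → ℝ) (hf : Differentiable ℝ f)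
    (hp : ∀ x i, f (x + EuclideanSpace.single i (1:ℝ)) = f x) (x : EuclideanSpace ℝ (Fin d))
    (i : Fin d) :
    fderiv ℝ f (x + EuclideanSpace.single i (1:ℝ)) = fderiv ℝ f x := by
  rw [← LL_fderiv_shift f hf _ x]
  congr 1
  exact funext fun y => hp y i

private lemma LL_integral_pderiv_zero (h : EuclideanSpace ℝ (Fin d) → ℝ) (hh : ContDiff ℝ (⊤ : ℕ∞) h)
    (hp : ∀ x i, h (x + EuclideanSpace.single i (1:ℝ)) = h x) (i : Fin d) :
    ∫ x in {x : EuclideanSpace ℝ (Fin d) | ∀ i, x i ∈ Set.Icc (0:ℝ) 1},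
      fderiv ℝ h x (EuclideanSpace.single i (1:ℝ)) = 0 := by
  obtain ⟨n, rfl⟩ : ∃ n, d = n + 1 := ⟨d - 1, by have := i.pos; omega⟩
  set e := (MeasurableEquiv.toLp 2 (Fin (n+1) → ℝ)).symm with he
  set L := (EuclideanSpace.equiv (Fin (n+1)) ℝ).symm with hL
  set g : (Fin (n+1) → ℝ) → ℝ := fun y => h (L y) with hg
  have hgc : ContDiff ℝ (⊤ : ℕ∞) g := hh.comp L.contDiff
  have hgd : ∀ y, HasFDerivAt g ((fderiv ℝ h (L y)).comp
      (L : (Fin (n+1) → ℝ) →L[ℝ] EuclideanSpace ℝ (Fin (n+1)))) y := fun y =>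
    ((hh.differentiable (by simp) (L y)).hasFDerivAt).comp y L.toContinuousLinearMap.hasFDerivAt
  have key : ∀ y : Fin (n+1) → ℝ,
      fderiv ℝ h (e.symm y) (EuclideanSpace.single i (1:ℝ))
        = fderiv ℝ g y (Pi.single i (1:ℝ)) := by
    intro y
    rw [(hgd y).fderiv]
    rfl
  have gper : ∀ y, g (y + Pi.single i (1:ℝ)) = g y := by
    intro y
    have h2 : L (y + Pi.single i (1:ℝ)) = L y + EuclideanSpace.single i (1:ℝ) := by
      rw [map_add]; rfl
    show h (L (y + Pi.single i (1:ℝ))) = h (L y)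
    rw [h2, hp]
  rw [LL_cube_eq]
  have trans := (EuclideanSpace.volume_preserving_symm_measurableEquiv_toLp
      (Fin (n+1))).setIntegral_preimage_emb e.measurableEmbedding
    (fun y => fderiv ℝ h (e.symm y) (EuclideanSpace.single i (1:ℝ))) (Set.Icc 0 1)
  change ∫ x in e ⁻¹' Set.Icc 0 1, fderiv ℝ h (e.symm (e x)) (EuclideanSpace.single i (1:ℝ)) = _
    at trans
  simp only [MeasurableEquiv.symm_apply_apply] at trans
  rw [show (MeasurableEquiv.toLp 2 (Fin (n+1) → ℝ)).symm = e from rfl, trans]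
  simp only [key]
  classical
  set f : (Fin (n+1) → ℝ) → (Fin (n+1) → ℝ) := fun x => Pi.single i (g x) with hf
  set f' : (Fin (n+1) → ℝ) → (Fin (n+1) → ℝ) →L[ℝ] (Fin (n+1) → ℝ) :=
    fun x => ContinuousLinearMap.pi (fun j => if j = i then fderiv ℝ g x else 0) with hf'
  have hdiv : ∀ x, (∑ j, f' x (Pi.single j 1) j) = fderiv ℝ g x (Pi.single i 1) := by
    intro x
    rw [Finset.sum_eq_single i]
    · simp [hf', ContinuousLinearMap.pi_apply]
    · intro j _ hj; simp [hf', ContinuousLinearMap.pi_apply, hj]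
    · simp
  have hgcont : Continuous g := hgc.continuous
  have hdercont : Continuous fun x => fderiv ℝ g x (Pi.single i (1:ℝ)) :=
    (hgc.continuous_fderiv (by simp)).clm_apply continuous_const
  have Hd : ∀ x, HasFDerivAt f (f' x) x := by
    intro x
    have comp : ∀ j, HasFDerivAt (fun y => f y j)
        ((if j = i then fderiv ℝ g x else 0)) x := by
      intro j
      rcases eq_or_ne j i with rfl | hj
      · simp only [if_pos rfl]
        have e1 : (fun y => f y j) = g := by
          funext y; simp [hf]
        rw [e1]
        exact (hgc.differentiable (by simp) x).hasFDerivAt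
      · have e1 : (fun y => f y j) = fun _ => (0:ℝ) := by
          funext y; simp [hf, Pi.single_eq_of_ne hj]
        rw [if_neg hj, e1]
        exact hasFDerivAt_const 0 x
    exact hasFDerivAt_pi.2 comp
  have Hc : Continuous f := by
    apply continuous_pi
    intro j
    show Continuous fun y => f y j
    rcases eq_or_ne j i with rfl | hj
    · have e1 : (fun y => f y j) = g := by funext y; simp [hf]
      rw [e1]; exact hgcont
    · have e1 : (fun y => f y j) = fun _ => (0:ℝ) := by
        funext y; simp [hf, Pi.single_eq_of_ne hj]
      rw [e1]; exact continuous_const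
  have div := MeasureTheory.integral_divergence_of_hasFDerivAt_off_countable
    (0 : Fin (n+1) → ℝ) 1 zero_le_one f f' ∅ Set.countable_empty
    Hc.continuousOn (fun x _ => Hd x)
    (by
      apply ContinuousOn.integrableOn_compact isCompact_Icc
      exact (by simpa only [hdiv] using hdercont.continuousOn))
  rw [show (fun y => fderiv ℝ g y (Pi.single i (1:ℝ)))
      = fun x => ∑ j, f' x (Pi.single j 1) j from funext fun x => (hdiv x).symm]
  rw [div]
  apply Finset.sum_eq_zero
  intro j _
  rw [sub_eq_zero]
  apply integral_congr_ae
  apply Filter.Eventually.of_forall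
  intro x
  rcases eq_or_ne j i with rfl | hj
  · have hins : (Fin.insertNth j ((1 : Fin (n+1) → ℝ) j) x : Fin (n+1) → ℝ)
        = Fin.insertNth j ((0 : Fin (n+1) → ℝ) j) x + Pi.single j 1 := by
      funext k
      rcases eq_or_ne k j with rfl | hk
      · simp [Fin.insertNth_apply_same]
      · obtain ⟨l, rfl⟩ := Fin.exists_succAbove_eq hk
        simp [Fin.insertNth_apply_succAbove, Pi.single_eq_of_ne (Fin.succAbove_ne j l)]
    show f (j.insertNth ((1:Fin (n+1)→ℝ) j) x) j = f (j.insertNth ((0:Fin (n+1)→ℝ) j) x) j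
    rw [hins]
    simp only [hf, Pi.single_eq_same]
    exact gper _
  · show f (j.insertNth ((1:Fin (n+1)→ℝ) j) x) j = f (j.insertNth ((0:Fin (n+1)→ℝ) j) x) j
    simp only [hf]
    rw [Pi.single_eq_of_ne hj, Pi.single_eq_of_ne hj]

private lemma LL_grad_apply (φ : EuclideanSpace ℝ (Fin d) → ℝ) (x : EuclideanSpace ℝ (Fin d))
    (i : Fin d) :
    gradient φ x i = fderiv ℝ φ x (EuclideanSpace.single i (1:ℝ)) := by
  have : fderiv ℝ φ x (EuclideanSpace.single i (1:ℝ))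
      = inner ℝ (gradient φ x) (EuclideanSpace.single i (1:ℝ)) := by
    rw [gradient]
    simp [InnerProductSpace.toDual_symm_apply]
  rw [this, EuclideanSpace.inner_single_right]
  simp

private lemma LL_normsq_eq (y : EuclideanSpace ℝ (Fin d)) : ‖y‖^2 = ∑ i, (y i)^2 := by
  rw [← real_inner_self_eq_norm_sq, PiLp.inner_apply]
  simp [sq]

end LLaux

/-- Lasry–Lions monotonicity for the first-order quadratic MFG system on the
torus (periodic smooth functions on ℝ^d, integrals over the unit cube). -/
theorem stmt_13 (d : ℕ)
    (V : EuclideanSpace ℝ (Fin d) → ℝ → ℝ)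
    (hVcont : Continuous fun p : EuclideanSpace ℝ (Fin d) × ℝ => V p.1 p.2)
    (hVmono : ∀ x, MonotoneOn (V x) (Set.Ici (0:ℝ)))
    (hVper : ∀ x y i, V (x + EuclideanSpace.single i (1:ℝ)) y = V x y)
    (u₁ u₂ m₁ m₂ : EuclideanSpace ℝ (Fin d) → ℝ)
    (hu₁ : ContDiff ℝ (⊤ : ℕ∞) u₁) (hu₂ : ContDiff ℝ (⊤ : ℕ∞) u₂)
    (hm₁ : ContDiff ℝ (⊤ : ℕ∞) m₁) (hm₂ : ContDiff ℝ (⊤ : ℕ∞) m₂)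
    (hm₁0 : ∀ x, 0 ≤ m₁ x) (hm₂0 : ∀ x, 0 ≤ m₂ x)
    (hper : ∀ f ∈ ({u₁, u₂, m₁, m₂} : Set (EuclideanSpace ℝ (Fin d) → ℝ)),
      ∀ x i, f (x + EuclideanSpace.single i (1:ℝ)) = f x)
    (F : (EuclideanSpace ℝ (Fin d) → ℝ) → (EuclideanSpace ℝ (Fin d) → ℝ) →
      EuclideanSpace ℝ (Fin d) → ℝ)
    (hF : ∀ u m x, F u m x = -u x - ‖gradient u x‖ ^ 2 / 2 + V x (m x))
    (G : (EuclideanSpace ℝ (Fin d) → ℝ) → (EuclideanSpace ℝ (Fin d) → ℝ) →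
      EuclideanSpace ℝ (Fin d) → ℝ)
    (hG : ∀ u m x, G u m x = m x -
      (∑ i, fderiv ℝ (fun y => m y * fderiv ℝ u y (EuclideanSpace.single i (1:ℝ))) x
        (EuclideanSpace.single i (1:ℝ))) - 1)
    (Q : Set (EuclideanSpace ℝ (Fin d)))
    (hQ : Q = {x | ∀ i, x i ∈ Set.Icc (0:ℝ) 1}) :
    (∫ x in Q, ((F u₁ m₁ x - F u₂ m₂ x) * (m₁ x - m₂ x)
        + (G u₁ m₁ x - G u₂ m₂ x) * (u₁ x - u₂ x)))
      = (∫ x in Q, (m₁ x + m₂ x) / 2 * ‖gradient u₁ x - gradient u₂ x‖ ^ 2)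
        + (∫ x in Q, (V x (m₁ x) - V x (m₂ x)) * (m₁ x - m₂ x)) ∧
    0 ≤ (∫ x in Q, (m₁ x + m₂ x) / 2 * ‖gradient u₁ x - gradient u₂ x‖ ^ 2)
        + (∫ x in Q, (V x (m₁ x) - V x (m₂ x)) * (m₁ x - m₂ x)) := by
  classical
  -- periodicity of the four functions
  have hpu₁ : ∀ x i, u₁ (x + EuclideanSpace.single i (1:ℝ)) = u₁ x := hper u₁ (by simp)
  have hpu₂ : ∀ x i, u₂ (x + EuclideanSpace.single i (1:ℝ)) = u₂ x := hper u₂ (by simp)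
  have hpm₁ : ∀ x i, m₁ (x + EuclideanSpace.single i (1:ℝ)) = m₁ x := hper m₁ (by simp)
  have hpm₂ : ∀ x i, m₂ (x + EuclideanSpace.single i (1:ℝ)) = m₂ x := hper m₂ (by simp)
  -- basic measurability / compactness of the cube
  have hQm : MeasurableSet Q := by
    rw [hQ, LL_cube_eq]
    exact (MeasurableEquiv.toLp 2 (Fin d → ℝ)).symm.measurable measurableSet_Icc
  have hQc : IsCompact Q := by
    rw [hQ, LL_cube_eq]
    exact (EuclideanSpace.equiv (Fin d) ℝ).toHomeomorph.isCompact_preimage.2 isCompact_Icc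
  have intg : ∀ {f : EuclideanSpace ℝ (Fin d) → ℝ}, Continuous f → IntegrableOn f Q :=
    fun hf => hf.continuousOn.integrableOn_compact hQc
  -- smoothness of partial derivatives and products
  have hDu₁ : ∀ i : Fin d, ContDiff ℝ (⊤ : ℕ∞)
      (fun y => fderiv ℝ u₁ y (EuclideanSpace.single i (1:ℝ))) :=
    fun i => (hu₁.fderiv_right (by simp)).clm_apply contDiff_const
  have hDu₂ : ∀ i : Fin d, ContDiff ℝ (⊤ : ℕ∞)
      (fun y => fderiv ℝ u₂ y (EuclideanSpace.single i (1:ℝ))) :=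
    fun i => (hu₂.fderiv_right (by simp)).clm_apply contDiff_const
  -- the auxiliary functions Φ i
  set Φ : Fin d → EuclideanSpace ℝ (Fin d) → ℝ := fun i y =>
    (m₁ y * fderiv ℝ u₁ y (EuclideanSpace.single i (1:ℝ))
      - m₂ y * fderiv ℝ u₂ y (EuclideanSpace.single i (1:ℝ))) * (u₁ y - u₂ y) with hΦdef
  have hΦc : ∀ i, ContDiff ℝ (⊤ : ℕ∞) (Φ i) := by
    intro i
    simp only [hΦdef]
    exact ((hm₁.mul (hDu₁ i)).sub (hm₂.mul (hDu₂ i))).mul (hu₁.sub hu₂)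
  have hΦp : ∀ i x j, Φ i (x + EuclideanSpace.single j (1:ℝ)) = Φ i x := by
    intro i x j
    simp only [hΦdef]
    rw [LL_fderiv_periodic u₁ (hu₁.differentiable (by simp)) hpu₁ x j,
      LL_fderiv_periodic u₂ (hu₂.differentiable (by simp)) hpu₂ x j,
      hpu₁ x j, hpu₂ x j, hpm₁ x j, hpm₂ x j]
  -- pointwise formula for the derivative of Φ i
  have hΦd : ∀ (i : Fin d) (x : EuclideanSpace ℝ (Fin d)),
      fderiv ℝ (Φ i) x (EuclideanSpace.single i (1:ℝ))
        = (fderiv ℝ (fun y => m₁ y * fderiv ℝ u₁ y (EuclideanSpace.single i (1:ℝ))) x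
              (EuclideanSpace.single i (1:ℝ))
            - fderiv ℝ (fun y => m₂ y * fderiv ℝ u₂ y (EuclideanSpace.single i (1:ℝ))) x
              (EuclideanSpace.single i (1:ℝ))) * (u₁ x - u₂ x)
          + (m₁ x * fderiv ℝ u₁ x (EuclideanSpace.single i (1:ℝ))
              - m₂ x * fderiv ℝ u₂ x (EuclideanSpace.single i (1:ℝ)))
            * (fderiv ℝ u₁ x (EuclideanSpace.single i (1:ℝ))
              - fderiv ℝ u₂ x (EuclideanSpace.single i (1:ℝ))) := by
    intro i x
    have d1 : DifferentiableAt ℝ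
        (fun y => m₁ y * fderiv ℝ u₁ y (EuclideanSpace.single i (1:ℝ))) x :=
      ((hm₁.mul (hDu₁ i)).differentiable (by simp) x)
    have d2 : DifferentiableAt ℝ
        (fun y => m₂ y * fderiv ℝ u₂ y (EuclideanSpace.single i (1:ℝ))) x :=
      ((hm₂.mul (hDu₂ i)).differentiable (by simp) x)
    have du1 : DifferentiableAt ℝ u₁ x := hu₁.differentiable (by simp) x
    have du2 : DifferentiableAt ℝ u₂ x := hu₂.differentiable (by simp) x
    simp only [hΦdef]
    rw [fderiv_fun_mul (d1.fun_sub d2) (du1.fun_sub du2)]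
    simp only [ContinuousLinearMap.add_apply, ContinuousLinearMap.smul_apply, smul_eq_mul,
      fderiv_fun_sub d1 d2, fderiv_fun_sub du1 du2, ContinuousLinearMap.sub_apply]
    ring
  -- ∫ of each divergence-form term vanishes
  have hzeroΦ : ∀ i : Fin d,
      ∫ x in Q, fderiv ℝ (Φ i) x (EuclideanSpace.single i (1:ℝ)) = 0 := by
    intro i
    rw [hQ]
    exact LL_integral_pderiv_zero (Φ i) (hΦc i) (hΦp i) i
  -- continuity facts
  have contΦd : ∀ i : Fin d,
      Continuous fun x => fderiv ℝ (Φ i) x (EuclideanSpace.single i (1:ℝ)) :=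
    fun i => ((hΦc i).continuous_fderiv (by simp)).clm_apply continuous_const
  have contSum : Continuous fun x =>
      ∑ i, fderiv ℝ (Φ i) x (EuclideanSpace.single i (1:ℝ)) :=
    continuous_finset_sum _ fun i _ => contΦd i
  have cg1 : Continuous fun x => gradient u₁ x :=
    (InnerProductSpace.toDual ℝ (EuclideanSpace ℝ (Fin d))).symm.continuous.comp
      (hu₁.continuous_fderiv (by simp))
  have cg2 : Continuous fun x => gradient u₂ x :=
    (InnerProductSpace.toDual ℝ (EuclideanSpace ℝ (Fin d))).symm.continuous.comp
      (hu₂.continuous_fderiv (by simp))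
  have contTT : Continuous fun x =>
      (m₁ x + m₂ x) / 2 * ‖gradient u₁ x - gradient u₂ x‖ ^ 2 :=
    ((hm₁.continuous.add hm₂.continuous).div_const 2).mul ((cg1.sub cg2).norm.pow 2)
  have cV1 : Continuous fun x => V x (m₁ x) :=
    hVcont.comp (continuous_id.prodMk hm₁.continuous)
  have cV2 : Continuous fun x => V x (m₂ x) :=
    hVcont.comp (continuous_id.prodMk hm₂.continuous)
  have contVV : Continuous fun x => (V x (m₁ x) - V x (m₂ x)) * (m₁ x - m₂ x) :=
    (cV1.sub cV2).mul (hm₁.continuous.sub hm₂.continuous)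
  -- the pointwise identity
  have PW : ∀ x : EuclideanSpace ℝ (Fin d),
      (F u₁ m₁ x - F u₂ m₂ x) * (m₁ x - m₂ x)
        + (G u₁ m₁ x - G u₂ m₂ x) * (u₁ x - u₂ x)
      = ((m₁ x + m₂ x) / 2 * ‖gradient u₁ x - gradient u₂ x‖ ^ 2
          + (V x (m₁ x) - V x (m₂ x)) * (m₁ x - m₂ x))
        - ∑ i, fderiv ℝ (Φ i) x (EuclideanSpace.single i (1:ℝ)) := by
    intro x
    have n1 : ‖gradient u₁ x‖^2
        = ∑ i, (fderiv ℝ u₁ x (EuclideanSpace.single i (1:ℝ)))^2 := by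
      rw [LL_normsq_eq]
      exact Finset.sum_congr rfl fun i _ => by rw [LL_grad_apply]
    have n2 : ‖gradient u₂ x‖^2
        = ∑ i, (fderiv ℝ u₂ x (EuclideanSpace.single i (1:ℝ)))^2 := by
      rw [LL_normsq_eq]
      exact Finset.sum_congr rfl fun i _ => by rw [LL_grad_apply]
    have n3 : ‖gradient u₁ x - gradient u₂ x‖^2
        = ∑ i, (fderiv ℝ u₁ x (EuclideanSpace.single i (1:ℝ))
            - fderiv ℝ u₂ x (EuclideanSpace.single i (1:ℝ)))^2 := by
      rw [LL_normsq_eq]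
      refine Finset.sum_congr rfl fun i _ => ?_
      rw [PiLp.sub_apply, LL_grad_apply, LL_grad_apply]
    simp only [hF, hG, hΦd, n1, n2, n3]
    -- split the last sum
    rw [Finset.sum_add_distrib, ← Finset.sum_mul, Finset.sum_sub_distrib]
    -- the quadratic sum identity
    have S' : (m₁ x + m₂ x) / 2 * (∑ i, (fderiv ℝ u₁ x (EuclideanSpace.single i (1:ℝ))
          - fderiv ℝ u₂ x (EuclideanSpace.single i (1:ℝ)))^2)
        + ((∑ i, (fderiv ℝ u₁ x (EuclideanSpace.single i (1:ℝ)))^2)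
            - (∑ i, (fderiv ℝ u₂ x (EuclideanSpace.single i (1:ℝ)))^2)) / 2 * (m₁ x - m₂ x)
        - ∑ i, ((m₁ x * fderiv ℝ u₁ x (EuclideanSpace.single i (1:ℝ))
            - m₂ x * fderiv ℝ u₂ x (EuclideanSpace.single i (1:ℝ)))
              * (fderiv ℝ u₁ x (EuclideanSpace.single i (1:ℝ))
                - fderiv ℝ u₂ x (EuclideanSpace.single i (1:ℝ)))) = 0 := by
      rw [Finset.mul_sum, ← Finset.sum_sub_distrib, Finset.sum_div, Finset.sum_mul,
        ← Finset.sum_add_distrib, ← Finset.sum_sub_distrib]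
      exact Finset.sum_eq_zero fun i _ => by ring
    linear_combination -S'
  constructor
  · calc
      (∫ x in Q, ((F u₁ m₁ x - F u₂ m₂ x) * (m₁ x - m₂ x)
          + (G u₁ m₁ x - G u₂ m₂ x) * (u₁ x - u₂ x)))
        = ∫ x in Q, (((m₁ x + m₂ x) / 2 * ‖gradient u₁ x - gradient u₂ x‖ ^ 2
            + (V x (m₁ x) - V x (m₂ x)) * (m₁ x - m₂ x))
          - ∑ i, fderiv ℝ (Φ i) x (EuclideanSpace.single i (1:ℝ))) :=
        integral_congr_ae (Filter.Eventually.of_forall fun x => PW x)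
      _ = (∫ x in Q, ((m₁ x + m₂ x) / 2 * ‖gradient u₁ x - gradient u₂ x‖ ^ 2
            + (V x (m₁ x) - V x (m₂ x)) * (m₁ x - m₂ x)))
          - ∫ x in Q, ∑ i, fderiv ℝ (Φ i) x (EuclideanSpace.single i (1:ℝ)) :=
        integral_sub (intg (contTT.add contVV)) (intg contSum)
      _ = (∫ x in Q, (m₁ x + m₂ x) / 2 * ‖gradient u₁ x - gradient u₂ x‖ ^ 2)
          + (∫ x in Q, (V x (m₁ x) - V x (m₂ x)) * (m₁ x - m₂ x)) := by
        rw [integral_add (intg contTT) (intg contVV)]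
        rw [MeasureTheory.integral_finset_sum _ (fun i _ => intg (contΦd i))]
        rw [Finset.sum_eq_zero fun i _ => hzeroΦ i]
        ring
  · have h1 : 0 ≤ ∫ x in Q, (m₁ x + m₂ x) / 2 * ‖gradient u₁ x - gradient u₂ x‖ ^ 2 :=
      setIntegral_nonneg hQm fun x _ =>
        mul_nonneg (div_nonneg (add_nonneg (hm₁0 x) (hm₂0 x)) (by norm_num)) (by positivity)
    have h2 : 0 ≤ ∫ x in Q, (V x (m₁ x) - V x (m₂ x)) * (m₁ x - m₂ x) := by
      refine setIntegral_nonneg hQm fun x _ => ?_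
      rcases le_total (m₁ x) (m₂ x) with h | h
      · have hv : V x (m₁ x) ≤ V x (m₂ x) :=
          hVmono x (Set.mem_Ici.2 (hm₁0 x)) (Set.mem_Ici.2 (hm₂0 x)) h
        nlinarith
      · have hv : V x (m₂ x) ≤ V x (m₁ x) :=
          hVmono x (Set.mem_Ici.2 (hm₂0 x)) (Set.mem_Ici.2 (hm₁0 x)) h
        nlinarith
    exact add_nonneg h1 h2
end
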